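/- arXiv:2404.04371 — 3 statements merged into one kernel-verified Lean document; each statement's English description precedes it below -/
import Mathlib

section
/- For every integer n ≥ 1, the polynomials Q₀(W,Z), Q₁(W,Z), …, Q_n(W,Z) are algebraically independent over ℂ in the polynomial ring ℂ[W,Z] in the 2n² entries of W and Z. -/
/-!
Specialising `W` and `Z` to the companion pencil of the generic polynomial
`x₀ + x₁ λ + ⋯ + x_n λⁿ` is a `ℂ`-algebra map sending each `Q_a` to the variable `x_a`.
Since the variables are algebraically independent, so are the `Q_a`.
-/

/-- The polynomial `Q_a(W,Z)` defined by `det(W + λ Z) = Σ_a Q_a(W,Z) λ^a`, as a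
multivariate polynomial over ℂ in the entries of two `n × n` matrix variables `W`
(indexed by `Sum.inl`) and `Z` (indexed by `Sum.inr`). -/
noncomputable def Qpoly (n a : ℕ) : MvPolynomial ((Fin n × Fin n) ⊕ (Fin n × Fin n)) ℂ :=
  Polynomial.coeff
    (Matrix.det (Matrix.of fun s t : Fin n =>
      Polynomial.C (MvPolynomial.X (Sum.inl (s, t))) +
        Polynomial.X * Polynomial.C (MvPolynomial.X (Sum.inr (s, t))))) a

open Polynomial Matrix

section Pencil

variable {R S ι : Type*} [CommRing R] [CommRing S]

noncomputable def pencil (W Z : Matrix ι ι R) : Matrix ι ι R[X] :=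
  of fun s t => C (W s t) + X * C (Z s t)

theorem pencil_map (f : R →+* S) (W Z : Matrix ι ι R) :
    (pencil W Z).map (mapRingHom f) = pencil (W.map f) (Z.map f) := by
  ext s t
  simp [pencil]

theorem map_coeff_det_pencil [Fintype ι] [DecidableEq ι] (f : R →+* S) (W Z : Matrix ι ι R)
    (a : ℕ) : f ((pencil W Z).det.coeff a) = (pencil (W.map f) (Z.map f)).det.coeff a := by
  rw [← coeff_map, ← coe_mapRingHom, RingHom.map_det, RingHom.mapMatrix_apply, pencil_map]

theorem aeval_Qpoly [Algebra ℂ S] {n : ℕ} (W Z : Matrix (Fin n) (Fin n) S) (a : ℕ) :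
    MvPolynomial.aeval (Sum.elim (Function.uncurry W) (Function.uncurry Z)) (Qpoly n a) =
      (pencil W Z).det.coeff a := by
  set f := (MvPolynomial.aeval (R := ℂ) (Sum.elim (Function.uncurry W) (Function.uncurry Z)))
  have hW : (of fun s t => MvPolynomial.X (Sum.inl (s, t))).map f.toRingHom = W := by
    ext; simp [f]; rfl
  have hZ : (of fun s t => MvPolynomial.X (Sum.inr (s, t))).map f.toRingHom = Z := by
    ext; simp [f]; rfl
  rw [← hW, ← hZ, ← map_coeff_det_pencil]
  rfl

end Pencil

theorem coeff_sum_fin_C_mul_X_pow {R : Type*} [CommRing R] {k : ℕ} (c : Fin k → R) (a : Fin k) :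
    (∑ b, C (c b) * X ^ (b : ℕ)).coeff a = c a := by
  simp [coeff_C_mul, coeff_X_pow, Fin.val_inj]

section Companion

variable {R : Type*} [CommRing R] {n : ℕ}

def companionW (c : Fin (n + 2) → R) : Matrix (Fin (n + 1)) (Fin (n + 1)) R :=
  of fun s t => if s = Fin.last n then c t.castSucc else if (t : ℕ) = s + 1 then -1 else 0

def companionZ (c : Fin (n + 2) → R) : Matrix (Fin (n + 1)) (Fin (n + 1)) R :=
  of fun s t => if s = Fin.last n then (if t = Fin.last n then c (Fin.last _) else 0)
    else if t = s then 1 else 0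

/-- `λ` on the diagonal and `-1` on the superdiagonal, except for the last row, which is
`(c₀, …, c_{n-1}, c_n + λ c_{n+1})`. -/
noncomputable abbrev companionPencil (c : Fin (n + 2) → R) :
    Matrix (Fin (n + 1)) (Fin (n + 1)) R[X] :=
  pencil (companionW c) (companionZ c)

theorem companionPencil_submatrix_succ (c : Fin (n + 3) → R) :
    (companionPencil c).submatrix Fin.succ Fin.succ = companionPencil (Fin.tail c) := by
  ext s t
  simp only [pencil, companionW, companionZ, Fin.tail, submatrix_apply, of_apply, Fin.succ_inj,
    Fin.val_succ, ← Fin.succ_last, Fin.succ_castSucc]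
  simp

theorem det_companionPencil_submatrix_castSucc_succ (c : Fin (n + 3) → R) :
    ((companionPencil c).submatrix Fin.castSucc Fin.succ).det = (-1) ^ (n + 1) := by
  have hlt (i : Fin (n + 1)) : (i : ℕ) ≠ n + 1 := i.is_lt.ne
  rw [det_of_isLowerTriangular]
  · simp [pencil, companionW, companionZ, Fin.ext_iff, hlt]
  · intro i j (hij : (i : ℕ) < j)
    simp [pencil, companionW, companionZ, Fin.ext_iff, hlt, hij.ne']
    omega

theorem det_companionPencil : ∀ {n : ℕ} (c : Fin (n + 2) → R),
    (companionPencil c).det = ∑ a, C (c a) * X ^ (a : ℕ)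
  | 0, c => by simp [det_unique, pencil, companionW, companionZ, Fin.sum_univ_two]
  | n + 1, c => by
    have h0 : companionPencil c 0 0 = X := by
      simp [pencil, companionW, companionZ, Fin.ext_iff]
    have hlast : companionPencil c (Fin.last _) 0 = C (c 0) := by
      simp [pencil, companionW, companionZ, Fin.ext_iff]
    have hmid (i : Fin (n + 2)) (hi : i ≠ 0 ∧ i ≠ Fin.last _) : companionPencil c i 0 = 0 := by
      simp [pencil, companionW, companionZ, hi.1, hi.2, Ne.symm hi.1]
    rw [det_succ_column_zero, Fintype.sum_eq_add 0 (Fin.last _) Fin.last_pos.ne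
      (fun i hi => by rw [hmid i hi]; ring), h0, hlast, Fin.succAbove_zero, Fin.succAbove_last,
      companionPencil_submatrix_succ, det_companionPencil,
      det_companionPencil_submatrix_castSucc_succ, Fin.sum_univ_succ (n := n + 2), Finset.mul_sum]
    simp only [Fin.val_zero, Fin.val_last, Fin.val_succ, Fin.tail]
    rw [add_comm]
    congr 1
    · rw [mul_right_comm, ← mul_pow, neg_one_mul, neg_neg, one_pow, one_mul, pow_zero, mul_one]
    · exact Finset.sum_congr rfl fun i _ => by ring

end Companion

/-- For every `n ≥ 1`, the polynomials `Q₀, Q₁, …, Q_n` are algebraically independent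
over ℂ in the polynomial ring `ℂ[W, Z]`. -/
theorem stmt8 (n : ℕ) (hn : 1 ≤ n) :
    AlgebraicIndependent ℂ (fun a : Fin (n + 1) => Qpoly n (a : ℕ)) := by
  obtain ⟨m, rfl⟩ := Nat.exists_eq_add_of_le' hn
  let x : Fin (m + 2) → MvPolynomial (Fin (m + 2)) ℂ := MvPolynomial.X
  let v := Sum.elim (Function.uncurry (companionW x)) (Function.uncurry (companionZ x))
  have hQ : MvPolynomial.aeval v ∘ (fun a : Fin (m + 2) => Qpoly (m + 1) a) = x := by
    ext1 a
    rw [Function.comp_apply, aeval_Qpoly, det_companionPencil, coeff_sum_fin_C_mul_X_pow]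
  exact .of_comp (MvPolynomial.aeval v) (hQ ▸ MvPolynomial.algebraicIndependent_X _ _)
end

section
/- A polynomial P(X,Y) in the entries of matrix variables X, Y ∈ M_{n,k}(ℂ) is pluriharmonic if and only if P(AX, BY) is harmonic for every (A,B) ∈ GL(n,ℂ) × GL(n,ℂ). In particular, a polynomial P that is homogeneous of degree v is pluriharmonic if and only if it is harmonic. -/
noncomputable section

/-- Variables for polynomials `P(X,Y)` in the entries of two `n × k` matrices:
`Sum.inl (s,u)` is the variable `x_{s,u}` and `Sum.inr (s,u)` is `y_{s,u}`. -/
abbrev XYVars (n k : ℕ) := (Fin n × Fin k) ⊕ (Fin n × Fin k)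

/-- The operator `Δ_{s,t} = Σ_{u=1}^{k} ∂²/(∂x_{s,u} ∂y_{t,u})` applied to `P`. -/
def Delta {n k : ℕ} (s t : Fin n) (P : MvPolynomial (XYVars n k) ℂ) :
    MvPolynomial (XYVars n k) ℂ :=
  ∑ u : Fin k,
    MvPolynomial.pderiv (Sum.inl (s, u)) (MvPolynomial.pderiv (Sum.inr (t, u)) P)

/-- `P` is pluriharmonic if `Δ_{s,t} P = 0` for all `1 ≤ s, t ≤ n`. -/
def Pluriharmonic {n k : ℕ} (P : MvPolynomial (XYVars n k) ℂ) : Prop :=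
  ∀ s t : Fin n, Delta s t P = 0

/-- `P` is harmonic if `Σ_s Δ_{s,s} P = 0`. -/
def Harmonic {n k : ℕ} (P : MvPolynomial (XYVars n k) ℂ) : Prop :=
  ∑ s : Fin n, Delta s s P = 0

/-- The substitution `P(X,Y) ↦ P(AX, BY)` on polynomials. -/
def substAB {n k : ℕ} (A B : Matrix (Fin n) (Fin n) ℂ) :
    MvPolynomial (XYVars n k) ℂ →ₐ[ℂ] MvPolynomial (XYVars n k) ℂ :=
  MvPolynomial.aeval
    (Sum.elim
      (fun p : Fin n × Fin k =>
        ∑ t : Fin n, MvPolynomial.C (A p.1 t) * MvPolynomial.X (Sum.inl (t, p.2)))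
      (fun p : Fin n × Fin k =>
        ∑ t : Fin n, MvPolynomial.C (B p.1 t) * MvPolynomial.X (Sum.inr (t, p.2))))

open MvPolynomial Matrix

/-- The substitution function underlying `substAB`. -/
def fAB {n k : ℕ} (A B : Matrix (Fin n) (Fin n) ℂ) :
    XYVars n k → MvPolynomial (XYVars n k) ℂ :=
  Sum.elim
    (fun p : Fin n × Fin k =>
      ∑ t : Fin n, MvPolynomial.C (A p.1 t) * MvPolynomial.X (Sum.inl (t, p.2)))
    (fun p : Fin n × Fin k =>
      ∑ t : Fin n, MvPolynomial.C (B p.1 t) * MvPolynomial.X (Sum.inr (t, p.2)))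

lemma substAB_apply {n k : ℕ} (A B : Matrix (Fin n) (Fin n) ℂ)
    (P : MvPolynomial (XYVars n k) ℂ) : substAB A B P = aeval (fAB A B) P := rfl

/-- Chain rule for partial derivatives of a polynomial substitution. -/
lemma pderiv_aeval' {σ τ : Type*} [Fintype σ] [DecidableEq σ] [DecidableEq τ]
    (f : σ → MvPolynomial τ ℂ) (j : τ) (P : MvPolynomial σ ℂ) :
    pderiv j (aeval f P) = ∑ i : σ, pderiv j (f i) * aeval f (pderiv i P) := by
  induction P using MvPolynomial.induction_on with
  | C a => simp
  | add p q hp hq => simp only [map_add, hp, hq, mul_add, Finset.sum_add_distrib]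
  | mul_X p i hp =>
      rw [_root_.map_mul, aeval_X, pderiv_mul, hp]
      have h : ∀ x : σ, pderiv j (f x) * aeval f (pderiv x (p * X i))
          = pderiv j (f x) * aeval f (pderiv x p) * f i
            + (if i = x then aeval f p * pderiv j (f x) else 0) := by
        intro x
        rw [pderiv_mul, pderiv_X, Pi.single_apply, map_add, _root_.map_mul, aeval_X]
        split_ifs with hx
        · subst hx; simp; ring
        · simp [mul_assoc]
      rw [Finset.sum_congr rfl fun x _ => h x, Finset.sum_add_distrib, Finset.sum_ite_eq,
        Finset.sum_mul]
      simp

lemma pd_inl {n k : ℕ} (A B : Matrix (Fin n) (Fin n) ℂ) (s : Fin n) (u : Fin k)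
    (P : MvPolynomial (XYVars n k) ℂ) :
    pderiv (Sum.inl (s,u)) (aeval (fAB A B) P)
      = ∑ a : Fin n, C (A a s) * aeval (fAB A B) (pderiv (Sum.inl (a,u)) P) := by
  rw [pderiv_aeval', Fintype.sum_sum_type]
  simp only [fAB, Sum.elim_inl, Sum.elim_inr, map_sum, pderiv_C_mul, pderiv_X,
    Pi.single_apply, Sum.inl.injEq, Sum.inr.injEq, Prod.mk.injEq, mul_ite, mul_one, mul_zero,
    ite_and, Finset.sum_ite_eq, Finset.mem_univ, if_true, Finset.sum_const_zero, add_zero,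
    Fintype.sum_prod_type, ite_mul, zero_mul, Finset.sum_ite_eq', reduceCtorEq, if_false]

lemma pd_inr {n k : ℕ} (A B : Matrix (Fin n) (Fin n) ℂ) (t : Fin n) (u : Fin k)
    (P : MvPolynomial (XYVars n k) ℂ) :
    pderiv (Sum.inr (t,u)) (aeval (fAB A B) P)
      = ∑ b : Fin n, C (B b t) * aeval (fAB A B) (pderiv (Sum.inr (b,u)) P) := by
  rw [pderiv_aeval', Fintype.sum_sum_type]
  simp only [fAB, Sum.elim_inl, Sum.elim_inr, map_sum, pderiv_C_mul, pderiv_X,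
    Pi.single_apply, Sum.inl.injEq, Sum.inr.injEq, Prod.mk.injEq, mul_ite, mul_one, mul_zero,
    ite_and, Finset.sum_ite_eq, Finset.mem_univ, if_true, Finset.sum_const_zero, zero_add,
    add_zero, Fintype.sum_prod_type, ite_mul, zero_mul, Finset.sum_ite_eq', reduceCtorEq,
    if_false]

lemma Delta_subst {n k : ℕ} (A B : Matrix (Fin n) (Fin n) ℂ) (s t : Fin n)
    (P : MvPolynomial (XYVars n k) ℂ) :
    Delta s t (substAB A B P)
      = ∑ a : Fin n, ∑ b : Fin n, C (A a s) * C (B b t) * substAB A B (Delta a b P) := by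
  simp only [Delta, substAB_apply]
  calc ∑ u : Fin k, pderiv (Sum.inl (s,u)) (pderiv (Sum.inr (t,u)) (aeval (fAB A B) P))
      = ∑ u : Fin k, ∑ b : Fin n, ∑ a : Fin n, C (B b t) * (C (A a s)
          * aeval (fAB A B) (pderiv (Sum.inl (a,u)) (pderiv (Sum.inr (b,u)) P))) := by
        refine Finset.sum_congr rfl fun u _ => ?_
        rw [pd_inr, map_sum]
        refine Finset.sum_congr rfl fun b _ => ?_
        rw [pderiv_C_mul, pd_inl, Finset.mul_sum]
    _ = ∑ b : Fin n, ∑ a : Fin n, ∑ u : Fin k, C (B b t) * (C (A a s)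
          * aeval (fAB A B) (pderiv (Sum.inl (a,u)) (pderiv (Sum.inr (b,u)) P))) := by
        rw [Finset.sum_comm]
        exact Finset.sum_congr rfl fun b _ => Finset.sum_comm
    _ = ∑ a : Fin n, ∑ b : Fin n, C (A a s) * C (B b t)
          * aeval (fAB A B) (∑ u : Fin k,
              pderiv (Sum.inl (a,u)) (pderiv (Sum.inr (b,u)) P)) := by
        rw [Finset.sum_comm]
        refine Finset.sum_congr rfl fun a _ => Finset.sum_congr rfl fun b _ => ?_
        rw [map_sum, Finset.mul_sum]
        exact Finset.sum_congr rfl fun u _ => by ring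

/-- The auxiliary linear combination `L(M) = Σ_{a,b} M_{a,b} Δ_{a,b} P`. -/
def LL {n k : ℕ} (M : Matrix (Fin n) (Fin n) ℂ) (P : MvPolynomial (XYVars n k) ℂ) :
    MvPolynomial (XYVars n k) ℂ :=
  ∑ a : Fin n, ∑ b : Fin n, C (M a b) * Delta a b P

lemma LL_add {n k : ℕ} (M N : Matrix (Fin n) (Fin n) ℂ) (P : MvPolynomial (XYVars n k) ℂ) :
    LL (M + N) P = LL M P + LL N P := by
  simp [LL, Matrix.add_apply, map_add, add_mul, Finset.sum_add_distrib]

lemma LL_stdBasis {n k : ℕ} (a b : Fin n) (P : MvPolynomial (XYVars n k) ℂ) :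
    LL (Matrix.single a b 1) P = Delta a b P := by
  simp [LL, Matrix.single, Matrix.of_apply, ite_and, apply_ite C,
    ite_mul, zero_mul, one_mul, Finset.sum_ite_eq, Finset.sum_ite_eq']

lemma sum_Delta_subst {n k : ℕ} (A B : Matrix (Fin n) (Fin n) ℂ)
    (P : MvPolynomial (XYVars n k) ℂ) :
    ∑ s : Fin n, Delta s s (substAB A B P) = substAB A B (LL (A * Bᵀ) P) := by
  have h1 : ∀ a b : Fin n, substAB A B (C ((A * Bᵀ) a b) * Delta a b P)
      = C ((A * Bᵀ) a b) * substAB A B (Delta a b P) := by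
    intro a b
    rw [_root_.map_mul]
    congr 1
    rw [substAB_apply, aeval_C]
    rfl
  rw [LL, map_sum]
  calc ∑ s : Fin n, Delta s s (substAB A B P)
      = ∑ s : Fin n, ∑ a : Fin n, ∑ b : Fin n,
          C (A a s) * C (B b s) * substAB A B (Delta a b P) := by
        exact Finset.sum_congr rfl fun s _ => Delta_subst A B s s P
    _ = ∑ a : Fin n, ∑ b : Fin n, ∑ s : Fin n,
          C (A a s) * C (B b s) * substAB A B (Delta a b P) := by
        rw [Finset.sum_comm]
        exact Finset.sum_congr rfl fun a _ => Finset.sum_comm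
    _ = ∑ a : Fin n, substAB A B (∑ b : Fin n, C ((A * Bᵀ) a b) * Delta a b P) := by
        refine Finset.sum_congr rfl fun a _ => ?_
        rw [map_sum]
        refine Finset.sum_congr rfl fun b _ => ?_
        rw [h1, Matrix.mul_apply]
        simp only [Matrix.transpose_apply, map_sum, Finset.sum_mul]
        exact Finset.sum_congr rfl fun s _ => by rw [_root_.map_mul]

lemma substAB_comp {n k : ℕ} (A B A' B' : Matrix (Fin n) (Fin n) ℂ)
    (P : MvPolynomial (XYVars n k) ℂ) :
    substAB A B (substAB A' B' P) = substAB (A' * A) (B' * B) P := by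
  have h : (substAB A B).comp (substAB A' B')
      = (substAB (A' * A) (B' * B) : MvPolynomial (XYVars n k) ℂ →ₐ[ℂ] _) := by
    apply MvPolynomial.algHom_ext
    intro i
    cases i with
    | inl p =>
        simp only [AlgHom.comp_apply, substAB_apply, aeval_X, fAB, Sum.elim_inl, map_sum,
          _root_.map_mul, aeval_C, Matrix.mul_apply, Finset.sum_mul]
        rw [Finset.sum_comm]
        refine Finset.sum_congr rfl fun t _ => ?_
        simp [Finset.mul_sum, Finset.sum_mul, mul_assoc]
    | inr p =>
        simp only [AlgHom.comp_apply, substAB_apply, aeval_X, fAB, Sum.elim_inr, map_sum,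
          _root_.map_mul, aeval_C, Matrix.mul_apply, Finset.sum_mul]
        rw [Finset.sum_comm]
        refine Finset.sum_congr rfl fun t _ => ?_
        simp [Finset.mul_sum, Finset.sum_mul, mul_assoc]
  exact DFunLike.congr_fun h P

lemma substAB_one_one {n k : ℕ} (P : MvPolynomial (XYVars n k) ℂ) :
    substAB 1 1 P = P := by
  rw [substAB_apply]
  have h : (fAB 1 1 : XYVars n k → MvPolynomial (XYVars n k) ℂ) = X := by
    funext i
    cases i <;>
      simp [fAB, Matrix.one_apply, apply_ite C, ite_mul, one_mul, zero_mul,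
        Finset.sum_ite_eq, Finset.sum_ite_eq']
  rw [h, aeval_X_left_apply]

lemma substAB_injective {n k : ℕ} (A B : Matrix (Fin n) (Fin n) ℂ)
    (hA : IsUnit A.det) (hB : IsUnit B.det) (Q : MvPolynomial (XYVars n k) ℂ)
    (h : substAB A B Q = 0) : Q = 0 := by
  have := congrArg (substAB A⁻¹ B⁻¹) h
  rw [substAB_comp, Matrix.mul_nonsing_inv A hA, Matrix.mul_nonsing_inv B hB,
    substAB_one_one, map_zero] at this
  exact this

lemma Delta_C_mul {n k : ℕ} (s t : Fin n) (c : ℂ) (P : MvPolynomial (XYVars n k) ℂ) :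
    Delta s t (C c * P) = C c * Delta s t P := by
  simp [Delta, pderiv_C_mul, Finset.mul_sum]

/-- A polynomial `P(X,Y)` in the entries of `X, Y ∈ M_{n,k}(ℂ)` is pluriharmonic if and only
if `P(AX, BY)` is harmonic for every `(A,B) ∈ GL(n,ℂ) × GL(n,ℂ)`.  In particular, a polynomial
`P` that is homogeneous of degree `v` (i.e. `P(AX,BY) = det(A)^v det(B)^v P(X,Y)` for all
invertible `A, B`) is pluriharmonic if and only if it is harmonic. -/
theorem stmt15 (n k v : ℕ) (P : MvPolynomial (XYVars n k) ℂ) :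
    (Pluriharmonic P ↔
      ∀ A B : Matrix (Fin n) (Fin n) ℂ, IsUnit A.det → IsUnit B.det →
        Harmonic (substAB A B P)) ∧
    ((∀ A B : Matrix (Fin n) (Fin n) ℂ, IsUnit A.det → IsUnit B.det →
        substAB A B P = MvPolynomial.C (A.det ^ v * B.det ^ v) * P) →
      (Pluriharmonic P ↔ Harmonic P)) := by
  have part1 : Pluriharmonic P ↔
      ∀ A B : Matrix (Fin n) (Fin n) ℂ, IsUnit A.det → IsUnit B.det →
        Harmonic (substAB A B P) := by
    constructor
    · intro h A B _ _
      have h' : ∀ s t : Fin n, Delta s t P = 0 := h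
      unfold Harmonic
      simp [Delta_subst, h']
    · intro h
      have key : ∀ M : Matrix (Fin n) (Fin n) ℂ, IsUnit M.det → LL M P = 0 := by
        intro M hM
        have hH := h M 1 hM (by simp)
        unfold Harmonic at hH
        rw [sum_Delta_subst, Matrix.transpose_one, mul_one] at hH
        exact substAB_injective M 1 hM (by simp) _ hH
      have hL1 : LL (1 : Matrix (Fin n) (Fin n) ℂ) P = 0 := key 1 (by simp)
      intro a b
      by_cases hab : a = b
      · subst hab
        set D : Matrix (Fin n) (Fin n) ℂ :=
          Matrix.diagonal (fun i => if i = a then 2 else 1) with hD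
        have hDdet : IsUnit D.det := by
          rw [hD, Matrix.det_diagonal]
          apply isUnit_iff_ne_zero.2
          rw [Finset.prod_ne_zero_iff]
          intro i _
          split_ifs <;> norm_num
        have hDeq : D = 1 + Matrix.single a a 1 := by
          ext i j
          simp only [hD, Matrix.diagonal_apply, Matrix.add_apply, Matrix.one_apply,
            Matrix.single, Matrix.of_apply]
          by_cases hij : i = j
          · subst hij
            by_cases hia : i = a
            · subst hia; norm_num
            · have hai : ¬ (a = i) := fun h => hia h.symm
              simp [hia, hai]
          · have hcon : ¬(a = i ∧ a = j) := fun h => hij (h.1.symm.trans h.2)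
            simp [hij, hcon]
        have := key D hDdet
        rw [hDeq, LL_add, hL1, LL_stdBasis, zero_add] at this
        exact this
      · have hdet : IsUnit (Matrix.transvection a b (1:ℂ)).det := by
          rw [Matrix.det_transvection_of_ne a b hab]
          exact isUnit_one
        have := key _ hdet
        rw [show Matrix.transvection a b (1:ℂ) = 1 + Matrix.single a b 1 from rfl,
          LL_add, hL1, LL_stdBasis, zero_add] at this
        exact this
  refine ⟨part1, fun hHom => ⟨fun h => ?_, fun hH => ?_⟩⟩
  · have h' : ∀ s t : Fin n, Delta s t P = 0 := h
    unfold Harmonic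
    simp [h']
  · apply part1.2
    intro A B hA hB
    rw [hHom A B hA hB]
    unfold Harmonic at hH ⊢
    simp only [Delta_C_mul, ← Finset.mul_sum, hH, mul_zero]
end
end

section
/- Let n ≥ 1 and k ≥ n be integers, and let X = (x_{s,u}) and Y = (y_{s,u}) be n×k matrices whose 2nk entries are independent indeterminates over ℂ. Then the n² entries of the n×n matrix X·ᵗY are algebraically independent over ℂ in ℂ[x_{s,u}, y_{s,u}]. -/
/-- Let `n ≥ 1`, `k ≥ n`, and let `X = (x_{s,u})`, `Y = (y_{s,u})` be `n × k` matrices of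
independent indeterminates over ℂ (the variables of `X` indexed by `Sum.inl`, those of `Y`
by `Sum.inr`).  Then the `n²` entries `(X ᵗY)_{s,t} = Σ_u x_{s,u} y_{t,u}` are algebraically
independent over ℂ. -/
theorem stmt16 (n k : ℕ) (hn : 1 ≤ n) (hk : n ≤ k) :
    AlgebraicIndependent ℂ (fun p : Fin n × Fin n =>
      ∑ u : Fin k,
        (MvPolynomial.X (Sum.inl (p.1, u)) :
            MvPolynomial ((Fin n × Fin k) ⊕ (Fin n × Fin k)) ℂ) *
          MvPolynomial.X (Sum.inr (p.2, u))) := by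
  classical
  set g : ((Fin n × Fin k) ⊕ (Fin n × Fin k)) → MvPolynomial (Fin n × Fin n) ℂ :=
    fun v => match v with
      | Sum.inl (s, u) => if h : (u : ℕ) < n then MvPolynomial.X (s, ⟨u, h⟩) else 0
      | Sum.inr (t, u) => if (t : ℕ) = (u : ℕ) then 1 else 0 with hg
  set φ : MvPolynomial ((Fin n × Fin k) ⊕ (Fin n × Fin k)) ℂ →ₐ[ℂ]
      MvPolynomial (Fin n × Fin n) ℂ := MvPolynomial.aeval g with hφ
  apply AlgebraicIndependent.of_comp φ
  have key : (φ ∘ fun p : Fin n × Fin n =>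
      ∑ u : Fin k,
        (MvPolynomial.X (Sum.inl (p.1, u)) :
            MvPolynomial ((Fin n × Fin k) ⊕ (Fin n × Fin k)) ℂ) *
          MvPolynomial.X (Sum.inr (p.2, u))) = fun p => MvPolynomial.X p := by
    funext p
    simp only [Function.comp, hφ, map_sum, map_mul, MvPolynomial.aeval_X, hg]
    rw [Finset.sum_eq_single (Fin.castLE hk p.2)]
    · have h2 : ((Fin.castLE hk p.2 : Fin k) : ℕ) = (p.2 : ℕ) := rfl
      rw [h2]
      simp [p.2.isLt]
    · intro u _ hu
      have : ¬ ((p.2 : ℕ) = (u : ℕ)) := by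
        intro h
        apply hu
        exact Fin.ext h.symm
      simp [this]
    · intro h
      exact absurd (Finset.mem_univ _) h
  rw [key]
  exact MvPolynomial.algebraicIndependent_X _ ℂ
end
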